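/- arXiv:1202.5947 — 3 statements merged into one kernel-verified Lean document; each statement's English description precedes it below -/
import Mathlib

section
/- Let P ⊆ ℝ^n be a rational polyhedron, Δ a regular triangulation of P, and f : ver(Δ) → ℚ^m a map defined on the vertices of Δ such that den(f(v)) divides den(v) for every v ∈ ver(Δ). Then there exists a unique Z-map η : P → ℝ^m such that (1) η is affine on each simplex of Δ, and (2) η restricted to ver(Δ) equals f. -/
/-!
On a regular simplex the homogeneous correspondents `ṽ` of the vertices are part of a basis of
`ℤ^{n+1}`, so some `ℤ`-linear map `ℤ^{n+1} → ℤ^m` sends each `ṽ` to `den(v) • f(v)`, an integer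
vector because `den(f v) ∣ den v`. Dehomogenizing this map gives an affine map with integer
coefficients that interpolates `f` on the simplex. Affine maps agreeing on the vertices of a
simplex agree on all of it, so these pieces agree on common faces and glue to a continuous
piecewise map on `P`; the same fact gives uniqueness.
-/

open scoped BigOperators

noncomputable section

/-- `x ∈ ℝ^n` is a rational point: all its coordinates are rational. -/
def IsRationalPoint {n : ℕ} (x : Fin n → ℝ) : Prop := ∀ i, ∃ q : ℚ, x i = (q : ℝ)

/-- `den x` : the least common denominator of the coordinates of a rational point `x`. -/
noncomputable def den {n : ℕ} (x : Fin n → ℝ) : ℕ :=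
  sInf {d : ℕ | 0 < d ∧ ∀ i, ∃ z : ℤ, (d : ℝ) * x i = (z : ℝ)}

/-- The homogeneous correspondent `ṽ = den(v)·(v,1) ∈ ℤ^{n+1}` of a rational point,
viewed as a real vector (its entries are integers when `v` is rational). -/
noncomputable def homCorr {n : ℕ} (x : Fin n → ℝ) : Fin (n + 1) → ℝ :=
  Fin.snoc (fun i => (den x : ℝ) * x i) (den x)

/-- The finite set `V` is the vertex set of a rational simplex. -/
def IsRationalSimplex {n : ℕ} (V : Finset (Fin n → ℝ)) : Prop :=
  (∀ v ∈ V, IsRationalPoint v) ∧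
    AffineIndependent ℝ (fun v : V => (v : Fin n → ℝ))

/-- The finite set `V` is the vertex set of a regular rational simplex: the homogeneous
correspondents of its vertices can be extended to a basis of the free abelian group `ℤ^{n+1}`. -/
def IsRegularSimplex {n : ℕ} (V : Finset (Fin n → ℝ)) : Prop :=
  IsRationalSimplex V ∧
    ∃ (b : Module.Basis (Fin (n + 1)) ℤ (Fin (n + 1) → ℤ)) (f : V → Fin (n + 1)),
      Function.Injective f ∧
        ∀ v : V, (fun i => ((b (f v) i : ℤ) : ℝ)) = homCorr (v : Fin n → ℝ)

/-- An indexed family of points is the vertex family of a regular rational simplex. -/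
def IsRegularFamily {n k : ℕ} (x : Fin k → (Fin n → ℝ)) : Prop :=
  (∀ i, IsRationalPoint (x i)) ∧ AffineIndependent ℝ x ∧
    ∃ (b : Module.Basis (Fin (n + 1)) ℤ (Fin (n + 1) → ℤ)) (f : Fin k → Fin (n + 1)),
      Function.Injective f ∧ ∀ i, (fun j => ((b (f i) j : ℤ) : ℝ)) = homCorr (x i)

/-- A (finite, geometric) simplicial complex, presented by the vertex sets of its simplexes. -/
def IsSimplicialComplex {n : ℕ} (K : Finset (Finset (Fin n → ℝ))) : Prop :=
  (∀ V ∈ K, V.Nonempty ∧ AffineIndependent ℝ (fun v : V => (v : Fin n → ℝ))) ∧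
  (∀ V ∈ K, ∀ W, W ⊆ V → W.Nonempty → W ∈ K) ∧
  (∀ V ∈ K, ∀ W ∈ K,
    convexHull ℝ (V : Set (Fin n → ℝ)) ∩ convexHull ℝ (W : Set (Fin n → ℝ)) =
      convexHull ℝ ((V : Set (Fin n → ℝ)) ∩ (W : Set (Fin n → ℝ))))

/-- The support of a simplicial complex: the union of its simplexes. -/
def complexSupport {n : ℕ} (K : Finset (Finset (Fin n → ℝ))) : Set (Fin n → ℝ) :=
  ⋃ V ∈ K, convexHull ℝ (V : Set (Fin n → ℝ))

/-- The set of vertices of a simplicial complex. -/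
def complexVerts {n : ℕ} (K : Finset (Finset (Fin n → ℝ))) : Set (Fin n → ℝ) :=
  ⋃ V ∈ K, (V : Set (Fin n → ℝ))

/-- `K` is a triangulation of `P`: a simplicial complex all of whose simplexes are rational,
with support `P`. -/
def IsTriangulation {n : ℕ} (K : Finset (Finset (Fin n → ℝ))) (P : Set (Fin n → ℝ)) : Prop :=
  IsSimplicialComplex K ∧ (∀ V ∈ K, IsRationalSimplex V) ∧ complexSupport K = P

/-- `K` is a regular triangulation of `P`: all its simplexes are regular. -/
def IsRegularTriangulation {n : ℕ} (K : Finset (Finset (Fin n → ℝ)))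
    (P : Set (Fin n → ℝ)) : Prop :=
  IsTriangulation K P ∧ ∀ V ∈ K, IsRegularSimplex V

/-- `K` is a subdivision of `Δ`: each simplex of `K` is contained in some simplex of `Δ`. -/
def IsSubdivision {n : ℕ} (K Δ : Finset (Finset (Fin n → ℝ))) : Prop :=
  ∀ V ∈ K, ∃ W ∈ Δ, convexHull ℝ (V : Set (Fin n → ℝ)) ⊆ convexHull ℝ (W : Set (Fin n → ℝ))

/-- `K` is a strongly regular triangulation of `P`: a regular triangulation all of whose
maximal simplexes have vertices whose denominators have greatest common divisor 1. -/
def IsStronglyRegularTriangulation {n : ℕ} (K : Finset (Finset (Fin n → ℝ)))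
    (P : Set (Fin n → ℝ)) : Prop :=
  IsRegularTriangulation K P ∧
    ∀ V ∈ K, (∀ W ∈ K, V ⊆ W → W = V) → Finset.gcd V den = 1

/-- `P ⊆ ℝ^n` is a rational polyhedron: a finite union of convex hulls of
finite sets of rational points. -/
def IsRationalPolyhedron {n : ℕ} (P : Set (Fin n → ℝ)) : Prop :=
  ∃ 𝒱 : Finset (Finset (Fin n → ℝ)),
    (∀ V ∈ 𝒱, ∀ v ∈ V, IsRationalPoint v) ∧
    P = ⋃ V ∈ 𝒱, convexHull ℝ (V : Set (Fin n → ℝ))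

/-- `η` is a Z-map on `P`: continuous on `P` and piecewise (affine with integer
coefficients), with finitely many pieces. -/
def IsZMap {n m : ℕ} (P : Set (Fin n → ℝ)) (η : (Fin n → ℝ) → (Fin m → ℝ)) : Prop :=
  ContinuousOn η P ∧
    ∃ L : List (Matrix (Fin m) (Fin n) ℤ × (Fin m → ℤ)),
      ∀ x ∈ P, ∃ l ∈ L, η x = fun i => (∑ j, (l.1 i j : ℝ) * x j) + (l.2 i : ℝ)

/-- A Z-map from `P` into `Q`. -/
def IsZMapTo {n m : ℕ} (P : Set (Fin n → ℝ)) (Q : Set (Fin m → ℝ))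
    (η : (Fin n → ℝ) → (Fin m → ℝ)) : Prop :=
  IsZMap P η ∧ Set.MapsTo η P Q

/-- `η` is a Z-homeomorphism of `P` onto `Q`: a bijective Z-map whose inverse is a Z-map. -/
def IsZHomeo {n m : ℕ} (P : Set (Fin n → ℝ)) (Q : Set (Fin m → ℝ))
    (η : (Fin n → ℝ) → (Fin m → ℝ)) : Prop :=
  IsZMapTo P Q η ∧ Set.BijOn η P Q ∧
    ∃ μ, IsZMapTo Q P μ ∧ Set.LeftInvOn μ η P ∧ Set.RightInvOn μ η Q

/-- `η` is a strict Z-map from `P` to `Q`: injective and a Z-homeomorphism onto its image. -/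
def IsStrictZMap {n m : ℕ} (P : Set (Fin n → ℝ)) (Q : Set (Fin m → ℝ))
    (η : (Fin n → ℝ) → (Fin m → ℝ)) : Prop :=
  IsZMapTo P Q η ∧ Set.InjOn η P ∧ IsZHomeo P (η '' P) η

/-- `η` coincides with a single affine map on the set `S`. -/
def AffineOnSet {n m : ℕ} (η : (Fin n → ℝ) → (Fin m → ℝ)) (S : Set (Fin n → ℝ)) : Prop :=
  ∃ (M : Matrix (Fin m) (Fin n) ℝ) (b : Fin m → ℝ),
    ∀ x ∈ S, η x = fun i => (∑ j, M i j * x j) + b i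

end

open scoped Matrix

section Denominators

variable {n : ℕ} {x : Fin n → ℝ}

theorem IsRationalPoint.den_mem (hx : IsRationalPoint x) :
    den x ∈ {d : ℕ | 0 < d ∧ ∀ i, ∃ z : ℤ, (d : ℝ) * x i = z} := by
  choose q hq using hx
  refine Nat.sInf_mem ⟨∏ i, (q i).den, Finset.prod_pos fun i _ => (q i).pos, fun i => ?_⟩
  obtain ⟨k, hk⟩ : (q i).den ∣ ∏ j, (q j).den := Finset.dvd_prod_of_mem _ (Finset.mem_univ i)
  refine ⟨k * (q i).num, ?_⟩
  rw [hq i, hk, Nat.cast_mul, mul_comm ((q i).den : ℝ), mul_assoc]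
  exact_mod_cast congrArg (fun r : ℚ => (k : ℝ) * r) (Rat.den_mul_eq_num (q i))

theorem IsRationalPoint.den_pos (hx : IsRationalPoint x) : 0 < den x :=
  hx.den_mem.1

theorem IsRationalPoint.den_smul_eq_intCast_of_den_dvd (hx : IsRationalPoint x) {d : ℕ}
    (hd : den x ∣ d) : ∃ z : Fin n → ℤ, (d : ℝ) • x = (↑) ∘ z := by
  obtain ⟨k, rfl⟩ := hd
  choose z hz using hx.den_mem.2
  refine ⟨fun i => z i * k, funext fun i => ?_⟩
  simp only [Pi.smul_apply, smul_eq_mul, Function.comp_apply, Nat.cast_mul, Int.cast_mul,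
    Int.cast_natCast, ← hz i]
  ring

end Denominators

def intAffineMap {n m : ℕ} (l : Matrix (Fin m) (Fin n) ℤ × (Fin m → ℤ))
    (x : Fin n → ℝ) : Fin m → ℝ :=
  fun i => (∑ j, (l.1 i j : ℝ) * x j) + (l.2 i : ℝ)

section AffineMaps

variable {n m : ℕ}

theorem continuous_intAffineMap (l : Matrix (Fin m) (Fin n) ℤ × (Fin m → ℤ)) :
    Continuous (intAffineMap l) := by
  unfold intAffineMap
  fun_prop

theorem affineOnSet_intAffineMap (l : Matrix (Fin m) (Fin n) ℤ × (Fin m → ℤ))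
    (s : Set (Fin n → ℝ)) : AffineOnSet (intAffineMap l) s :=
  ⟨fun i j => l.1 i j, fun i => l.2 i, fun _ _ => rfl⟩

theorem AffineOnSet.congr {g h : (Fin n → ℝ) → (Fin m → ℝ)} {s : Set (Fin n → ℝ)}
    (hg : AffineOnSet g s) (hgh : Set.EqOn g h s) : AffineOnSet h s := by
  obtain ⟨M, c, hMc⟩ := hg
  exact ⟨M, c, fun x hx => (hgh hx).symm.trans (hMc x hx)⟩

theorem AffineOnSet.eqOn_convexHull {g h : (Fin n → ℝ) → (Fin m → ℝ)} {s : Set (Fin n → ℝ)}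
    (hg : AffineOnSet g (convexHull ℝ s)) (hh : AffineOnSet h (convexHull ℝ s))
    (hgh : Set.EqOn g h s) : Set.EqOn g h (convexHull ℝ s) := by
  have affine : ∀ (M : Matrix (Fin m) (Fin n) ℝ) (c : Fin m → ℝ),
      ∃ A : (Fin n → ℝ) →ᵃ[ℝ] (Fin m → ℝ), ∀ x, A x = M *ᵥ x + c := fun M c =>
    ⟨(Matrix.toLin' M).toAffineMap + AffineMap.const ℝ _ c, fun x => rfl⟩
  obtain ⟨M₁, c₁, hg⟩ := hg
  obtain ⟨M₂, c₂, hh⟩ := hh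
  obtain ⟨A₁, hA₁⟩ := affine M₁ c₁
  obtain ⟨A₂, hA₂⟩ := affine M₂ c₂
  have hA : Set.EqOn A₁ A₂ s := fun x hx => by
    rw [hA₁, hA₂]
    exact (hg x (subset_convexHull ℝ s hx)).symm.trans ((hgh hx).trans
      (hh x (subset_convexHull ℝ s hx)))
  intro x hx
  rw [hg x hx, hh x hx]
  have hx' := AffineMap.eqOn_affineSpan hA (convexHull_subset_affineSpan s hx)
  rw [hA₁, hA₂] at hx'
  exact hx'

end AffineMaps

theorem Matrix.map_intCast_mulVec_homCorr {n m : ℕ} (M : Matrix (Fin m) (Fin (n + 1)) ℤ)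
    (x : Fin n → ℝ) :
    M.map (↑) *ᵥ homCorr x =
      (den x : ℝ) • intAffineMap (M.submatrix id Fin.castSucc, fun i => M i (Fin.last n)) x := by
  funext i
  simp only [Matrix.mulVec, dotProduct, Fin.sum_univ_castSucc, homCorr, Fin.snoc_castSucc,
    Fin.snoc_last, Matrix.map_apply, intAffineMap, Matrix.submatrix_apply, id, Pi.smul_apply,
    smul_eq_mul, mul_add, Finset.mul_sum]
  congr 1
  · exact Finset.sum_congr rfl fun j _ => by ring
  · ring

theorem IsRegularSimplex.exists_intAffineMap_eq {n m : ℕ} {V : Finset (Fin n → ℝ)}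
    (hV : IsRegularSimplex V) {f : (Fin n → ℝ) → (Fin m → ℝ)}
    (hf : ∀ v ∈ V, IsRationalPoint (f v) ∧ den (f v) ∣ den v) :
    ∃ l, ∀ v ∈ V, intAffineMap l v = f v := by
  classical
  obtain ⟨⟨hrat, -⟩, b, g, hg, hbg⟩ := hV
  choose w hw using fun v : V => (hf v v.2).1.den_smul_eq_intCast_of_den_dvd (hf v v.2).2
  let T := b.constr ℤ (Function.extend g w 0)
  have hT : ∀ v, T (b (g v)) = w v := fun v => by
    simp only [T, b.constr_basis, hg.extend_apply]
  let M := LinearMap.toMatrix' T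
  refine ⟨(M.submatrix id Fin.castSucc, fun i => M i (Fin.last n)), fun v hv => ?_⟩
  have hden : (den v : ℝ) ≠ 0 := Nat.cast_ne_zero.mpr (hrat v hv).den_pos.ne'
  refine smul_right_injective _ hden ?_
  dsimp only
  rw [← Matrix.map_intCast_mulVec_homCorr, ← hbg ⟨v, hv⟩, hw ⟨v, hv⟩, ← hT ⟨v, hv⟩,
    ← LinearMap.toMatrix'_mulVec T]
  funext i
  exact ((Int.castRingHom ℝ).map_mulVec M _ i).symm

theorem exists_eqOn_of_eqOn_inter {ι α β : Type*} [Nonempty β] (S : ι → Set α) (A : ι → α → β)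
    (hA : ∀ i j, Set.EqOn (A i) (A j) (S i ∩ S j)) :
    ∃ η : α → β, ∀ i, Set.EqOn η (A i) (S i) := by
  classical
  refine ⟨fun x => if h : ∃ i, x ∈ S i then A h.choose x else Classical.arbitrary β,
    fun i x hx => ?_⟩
  have h : ∃ i, x ∈ S i := ⟨i, hx⟩
  simp only [dif_pos h]
  exact hA _ _ ⟨h.choose_spec, hx⟩

theorem isZMap_iUnion {ι : Type*} [Fintype ι] {n m : ℕ} {S : ι → Set (Fin n → ℝ)}
    (hS : ∀ i, IsClosed (S i)) {η : (Fin n → ℝ) → (Fin m → ℝ)}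
    (l : ι → Matrix (Fin m) (Fin n) ℤ × (Fin m → ℤ))
    (hη : ∀ i, Set.EqOn η (intAffineMap (l i)) (S i)) : IsZMap (⋃ i, S i) η := by
  refine ⟨(locallyFinite_of_finite S).continuousOn_iUnion hS fun i =>
    (continuous_intAffineMap (l i)).continuousOn.congr (hη i), ?_⟩
  refine ⟨(Finset.univ.val.map l).toList, fun x hx => ?_⟩
  obtain ⟨i, hi⟩ := Set.mem_iUnion.mp hx
  exact ⟨l i, by simp, hη i hi⟩

theorem statement8_general {n m : ℕ} {P : Set (Fin n → ℝ)}
    (Δ : Finset (Finset (Fin n → ℝ))) (hΔ : IsRegularTriangulation Δ P)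
    (f : (Fin n → ℝ) → (Fin m → ℝ))
    (hf : ∀ v ∈ complexVerts Δ, IsRationalPoint (f v) ∧ den (f v) ∣ den v) :
    ∃ η : (Fin n → ℝ) → (Fin m → ℝ),
      (IsZMap P η ∧ (∀ V ∈ Δ, AffineOnSet η (convexHull ℝ (V : Set (Fin n → ℝ)))) ∧
        ∀ v ∈ complexVerts Δ, η v = f v) ∧
      ∀ η' : (Fin n → ℝ) → (Fin m → ℝ),
        (IsZMap P η' ∧ (∀ V ∈ Δ, AffineOnSet η' (convexHull ℝ (V : Set (Fin n → ℝ)))) ∧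
          ∀ v ∈ complexVerts Δ, η' v = f v) →
        Set.EqOn η' η P := by
  obtain ⟨⟨⟨-, -, hinter⟩, -, rfl⟩, hreg⟩ := hΔ
  have hvert : ∀ V ∈ Δ, ∀ v ∈ V, v ∈ complexVerts Δ := fun V hV v hv => Set.mem_biUnion hV hv
  have hsupp : complexSupport Δ = ⋃ V : Δ, convexHull ℝ (V : Set (Fin n → ℝ)) :=
    Set.biUnion_eq_iUnion _ _
  choose l hl using fun V : Δ => (hreg V V.2).exists_intAffineMap_eq fun v hv =>
    hf v (hvert V V.2 v hv)
  obtain ⟨η, hη⟩ := exists_eqOn_of_eqOn_inter (fun V : Δ => convexHull ℝ (V : Set (Fin n → ℝ)))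
    (fun V => intAffineMap (l V)) fun V W => by
      rw [hinter V V.2 W W.2]
      refine AffineOnSet.eqOn_convexHull (affineOnSet_intAffineMap _ _)
        (affineOnSet_intAffineMap _ _) fun v hv => ?_
      rw [hl V v hv.1, hl W v hv.2]
  have hηf : ∀ v ∈ complexVerts Δ, η v = f v := fun v hv => by
    obtain ⟨V, hV, hvV⟩ := Set.mem_iUnion₂.mp hv
    rw [hη ⟨V, hV⟩ (subset_convexHull ℝ _ hvV), hl ⟨V, hV⟩ v hvV]
  have haff : ∀ V ∈ Δ, AffineOnSet η (convexHull ℝ (V : Set (Fin n → ℝ))) := fun V hV =>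
    (affineOnSet_intAffineMap _ _).congr (hη ⟨V, hV⟩).symm
  refine ⟨η, ⟨?_, haff, hηf⟩, fun η' ⟨_, haff', hη'f⟩ x hx => ?_⟩
  · rw [hsupp]
    exact isZMap_iUnion (fun V => (V.1.finite_toSet.isCompact_convexHull (𝕜 := ℝ)).isClosed) l hη
  · obtain ⟨V, hV, hxV⟩ := Set.mem_iUnion₂.mp hx
    exact (haff' V hV).eqOn_convexHull (haff V hV)
      (fun v hv => (hη'f v (hvert V hV v hv)).trans (hηf v (hvert V hV v hv)).symm) hxV

/-- Corollary (ExtensionToZed): given a regular triangulation `Δ` of `P` and a map `f` on the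
vertices of `Δ` with rational values whose denominators divide those of the vertices, there is a
unique Z-map `η : P → ℝ^m` affine on each simplex of `Δ` and agreeing with `f` on the vertices. -/
theorem statement8 {n m : ℕ} {P : Set (Fin n → ℝ)} (hP : IsRationalPolyhedron P)
    (Δ : Finset (Finset (Fin n → ℝ))) (hΔ : IsRegularTriangulation Δ P)
    (f : (Fin n → ℝ) → (Fin m → ℝ))
    (hf : ∀ v ∈ complexVerts Δ, IsRationalPoint (f v) ∧ den (f v) ∣ den v) :
    ∃ η : (Fin n → ℝ) → (Fin m → ℝ),
      (IsZMap P η ∧ (∀ V ∈ Δ, AffineOnSet η (convexHull ℝ (V : Set (Fin n → ℝ)))) ∧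
        ∀ v ∈ complexVerts Δ, η v = f v) ∧
      ∀ η' : (Fin n → ℝ) → (Fin m → ℝ),
        (IsZMap P η' ∧ (∀ V ∈ Δ, AffineOnSet η' (convexHull ℝ (V : Set (Fin n → ℝ)))) ∧
          ∀ v ∈ complexVerts Δ, η' v = f v) →
        Set.EqOn η' η P :=
  statement8_general Δ hΔ f hf
end

section
/- Let P ⊆ ℝ^n and Q ⊆ ℝ^m be rational polyhedra and η : P → Q a Z-map. Then: (i) η is injective if and only if for every rational polyhedron R and all Z-maps μ_1, μ_2 : R → P with η ∘ μ_1 = η ∘ μ_2 one has μ_1 = μ_2; (ii) η is surjective onto Q if and only if for every rational polyhedron R and all Z-maps μ_1, μ_2 : Q → R with μ_1 ∘ η = μ_2 ∘ η one has μ_1 = μ_2. -/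
open scoped BigOperators

/-!
Injectivity: suppose `η a = η b` with `a ≠ b`. Take a `ℚ`-linear functional `g : ℝ → ℚ` with
`g 1 = 1` that is close to the identity on the finitely many reals involved (such functionals are
dense, by a Hamel basis containing `1`). Applied coordinatewise, `g` keeps convex combinations of
rational vertices in their hull and commutes with integer affine maps. Since near `a` the map `η`
only uses integer affine pieces that agree with it at `a`, this gives `η (g ∘ a) = g ∘ η a`, and
likewise at `b`; so `g` turns `a, b` into distinct rational points of `P` with equal images.
Two rational points are the images of a single rational point of `ℝ¹` under integer linear maps,
which contradicts monicity.

Surjectivity: a point `q ∈ Q \ η(P)` has positive distance from the compact set `η(P)`, so the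
tent function `max 0 (m + 1 - ∑ i, |D * y i - round (D * q i)|)`, for `D` large, is a Z-map
`Q → [0, m + 1]` that vanishes on `η(P)` but not at `q`; comparing it with `0` contradicts
epicity.
-/

open Filter Topology

section IntAffine

variable {n m : ℕ}

def intAffine (l : Matrix (Fin m) (Fin n) ℤ × (Fin m → ℤ)) (x : Fin n → ℝ) : Fin m → ℝ :=
  fun i => (∑ j, (l.1 i j : ℝ) * x j) + (l.2 i : ℝ)

theorem continuous_intAffine (l : Matrix (Fin m) (Fin n) ℤ × (Fin m → ℤ)) :
    Continuous (intAffine l) := by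
  unfold intAffine
  fun_prop

theorem isZMap_of_finite {P : Set (Fin n → ℝ)} {η : (Fin n → ℝ) → (Fin m → ℝ)}
    (hη : ContinuousOn η P) {S : Set (Matrix (Fin m) (Fin n) ℤ × (Fin m → ℤ))} (hS : S.Finite)
    (h : ∀ x ∈ P, ∃ l ∈ S, η x = intAffine l x) : IsZMap P η :=
  ⟨hη, hS.toFinset.toList, fun x hx => by
    obtain ⟨l, hl, e⟩ := h x hx
    exact ⟨l, by simpa using hl, e⟩⟩

theorem isZMap_intAffine (P : Set (Fin n → ℝ)) (l : Matrix (Fin m) (Fin n) ℤ × (Fin m → ℤ)) :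
    IsZMap P (intAffine l) :=
  isZMap_of_finite (continuous_intAffine l).continuousOn (Set.finite_singleton l)
    fun _ _ => ⟨l, rfl, rfl⟩

theorem IsZMap.exists_intAffine {P : Set (Fin n → ℝ)} {η : (Fin n → ℝ) → (Fin m → ℝ)}
    (hη : IsZMap P η) : ∃ S : Set (Matrix (Fin m) (Fin n) ℤ × (Fin m → ℤ)), S.Finite ∧
      ∀ x ∈ P, ∃ l ∈ S, η x = intAffine l x := by
  obtain ⟨-, L, hL⟩ := hη
  exact ⟨{l | l ∈ L}, L.finite_toSet, hL⟩

end IntAffine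

theorem IsRationalPolyhedron.isCompact {n : ℕ} {P : Set (Fin n → ℝ)}
    (hP : IsRationalPolyhedron P) : IsCompact P := by
  obtain ⟨𝒱, -, rfl⟩ := hP
  exact 𝒱.finite_toSet.isCompact_biUnion fun V _ => V.finite_toSet.isCompact_convexHull ℝ

theorem isRationalPolyhedron_convexHull {n : ℕ} (V : Finset (Fin n → ℝ))
    (hV : ∀ v ∈ V, IsRationalPoint v) : IsRationalPolyhedron (convexHull ℝ (V : Set (Fin n → ℝ))) :=
  ⟨{V}, by simpa using hV, by rw [Finset.set_biUnion_singleton]⟩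

theorem eventually_ne_of_tendsto {α Y : Type*} [TopologicalSpace Y] [T2Space Y] {l : Filter α}
    {f g : α → Y} {a b : Y} (hf : Tendsto f l (𝓝 a)) (hg : Tendsto g l (𝓝 b)) (hab : a ≠ b) :
    ∀ᶠ x in l, f x ≠ g x :=
  hf.prodMk_nhds hg (isClosed_diagonal.isOpen_compl.mem_nhds hab)

theorem eventually_eq_piece_of_finite {X Y ι : Type*} [TopologicalSpace X] [TopologicalSpace Y]
    [T2Space Y] {s : Set X} {f : X → Y} {g : ι → X → Y} {S : Set ι} (hS : S.Finite)
    (hf : ContinuousOn f s) (hg : ∀ i, Continuous (g i)) (h : ∀ x ∈ s, ∃ i ∈ S, f x = g i x)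
    {a : X} (ha : a ∈ s) : ∀ᶠ x in 𝓝[s] a, ∃ i ∈ S, g i a = f a ∧ f x = g i x := by
  have hsep : ∀ᶠ x in 𝓝[s] a, ∀ i ∈ S, g i a ≠ f a → g i x ≠ f x := by
    refine (eventually_all_finite hS).2 fun i _ => ?_
    by_cases hi : g i a = f a
    · exact .of_forall fun _ hne => absurd hi hne
    · filter_upwards [eventually_ne_of_tendsto
        ((hg i).continuousAt.tendsto.mono_left nhdsWithin_le_nhds) (hf a ha) hi] with x hx _
      exact hx
  filter_upwards [hsep, self_mem_nhdsWithin] with x hx hxs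
  obtain ⟨i, hi, hfx⟩ := h x hxs
  exact ⟨i, hi, not_not.1 fun hne => hx i hi hne hfx.symm, hfx⟩

def IsRationalizer (g : ℝ → ℝ) : Prop := ∃ f : ℝ →ₗ[ℚ] ℚ, f 1 = 1 ∧ ∀ t, g t = f t

namespace IsRationalizer

variable {g : ℝ → ℝ}

theorem map_add (hg : IsRationalizer g) (s t : ℝ) : g (s + t) = g s + g t := by
  obtain ⟨f, -, hf⟩ := hg
  simp [hf]

theorem map_sum (hg : IsRationalizer g) {ι : Type*} (s : Finset ι) (t : ι → ℝ) :
    g (∑ i ∈ s, t i) = ∑ i ∈ s, g (t i) := by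
  obtain ⟨f, -, hf⟩ := hg
  simp [hf]

theorem map_ratCast_mul (hg : IsRationalizer g) (q : ℚ) (t : ℝ) : g (q * t) = q * g t := by
  obtain ⟨f, -, hf⟩ := hg
  rw [hf, hf, ← Rat.smul_def, map_smul, smul_eq_mul, Rat.cast_mul]

theorem map_ratCast (hg : IsRationalizer g) (q : ℚ) : g q = q := by
  have h1 : g 1 = 1 := by
    obtain ⟨f, hf1, hf⟩ := hg
    simp [hf, hf1]
  simpa [h1] using hg.map_ratCast_mul q 1

theorem isRationalPoint (hg : IsRationalizer g) {n : ℕ} (x : Fin n → ℝ) :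
    IsRationalPoint (g ∘ x) := by
  obtain ⟨f, -, hf⟩ := hg
  exact fun i => ⟨f (x i), hf (x i)⟩

theorem intAffine_comp (hg : IsRationalizer g) {n m : ℕ}
    (l : Matrix (Fin m) (Fin n) ℤ × (Fin m → ℤ)) (x : Fin n → ℝ) :
    intAffine l (g ∘ x) = g ∘ intAffine l x := by
  funext i
  have hint : ∀ z : ℤ, ((z : ℚ) : ℝ) = z := fun z => Rat.cast_intCast z
  simp only [intAffine, Function.comp_apply, hg.map_add, hg.map_sum, ← hint,
    hg.map_ratCast_mul, hg.map_ratCast]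

end IsRationalizer

theorem id_mem_closure_setOf_isRationalizer : (id : ℝ → ℝ) ∈ closure {g | IsRationalizer g} := by
  have hone : LinearIndepOn ℚ id ({1} : Set ℝ) := (linearIndepOn_singleton_iff ℚ).2 one_ne_zero
  set b := Module.Basis.extend hone
  set j₀ : hone.extend (Set.subset_univ _) := ⟨1, Module.Basis.subset_extend hone rfl⟩
  have hb : ∀ j, b j = j := Module.Basis.extend_apply_self hone
  have happrox : ∀ x : ℝ, ∃ u : ℕ → ℚ, Tendsto (fun k => (u k : ℝ)) atTop (𝓝 x) := fun x => by
    obtain ⟨u, hu, hlim⟩ := mem_closure_iff_seq_limit.1 (Rat.denseRange_cast (𝕜 := ℝ) x)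
    choose r hr using hu
    exact ⟨r, by simpa [hr] using hlim⟩
  choose u hu using happrox
  -- rational approximations of the basis vectors, exact at the basis vector `1`
  set v : hone.extend (Set.subset_univ _) → ℕ → ℚ := fun j => if j = j₀ then 1 else u (b j)
  have hv : ∀ j, Tendsto (fun k => (v j k : ℝ)) atTop (𝓝 (b j)) := by
    intro j
    by_cases hj : j = j₀
    · simp [v, hj, hb, j₀]
    · simpa [v, hj] using hu (b j)
  refine mem_closure_of_tendsto (b := atTop)
    (f := fun (k : ℕ) t => (b.constr ℚ (fun j => v j k) t : ℝ)) ?_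
    (.of_forall fun k => ⟨b.constr ℚ (fun j => v j k), ?_, fun t => rfl⟩)
  · refine tendsto_pi_nhds.2 fun t => ?_
    have hlim := tendsto_finsetSum (b.repr t).support
      fun j _ => (hv j).const_mul ((b.repr t j : ℚ) : ℝ)
    convert hlim using 1
    · funext k
      simp [Module.Basis.constr_apply, Finsupp.sum, Rat.cast_sum]
    · conv_lhs => rw [id, ← b.linearCombination_repr t]
      simp [Finsupp.linearCombination_apply, Finsupp.sum, Rat.smul_def]
  · simpa [v, hb, j₀] using b.constr_basis ℚ (fun j => v j k) j₀

theorem tendsto_comp_nhdsWithin_id {n : ℕ} (s : Set (ℝ → ℝ)) (x : Fin n → ℝ) :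
    Tendsto (fun g : ℝ → ℝ => g ∘ x) (𝓝[s] id) (𝓝 x) :=
  ((continuous_pi fun i => continuous_apply (x i)).tendsto id).mono_left nhdsWithin_le_nhds

theorem eventually_isRationalizer_comp_mem_convexHull {n : ℕ} {V : Finset (Fin n → ℝ)}
    (hV : ∀ v ∈ V, IsRationalPoint v) {a : Fin n → ℝ}
    (ha : a ∈ convexHull ℝ (V : Set (Fin n → ℝ))) :
    ∀ᶠ g in 𝓝[{g | IsRationalizer g}] id, g ∘ a ∈ convexHull ℝ (V : Set (Fin n → ℝ)) := by
  obtain ⟨w, hw0, hw1, rfl⟩ := Finset.mem_convexHull'.1 ha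
  have hpos : ∀ᶠ g in 𝓝[{g | IsRationalizer g}] id, ∀ v ∈ V, 0 ≤ g (w v) := by
    refine (eventually_all_finite V.finite_toSet).2 fun v hv => ?_
    rcases (hw0 v hv).eq_or_lt with h | h
    · filter_upwards [self_mem_nhdsWithin] with g hg
      simpa [← h] using (hg.map_ratCast 0).ge
    · have hlim : Tendsto (fun g : ℝ → ℝ => g (w v)) (𝓝[{g | IsRationalizer g}] id) (𝓝 (w v)) :=
        ((continuous_apply (w v)).tendsto id).mono_left nhdsWithin_le_nhds
      exact (hlim.eventually (lt_mem_nhds h)).mono fun _ => le_of_lt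
  filter_upwards [hpos, self_mem_nhdsWithin] with g hg hR
  refine Finset.mem_convexHull'.2 ⟨fun v => g (w v), hg, ?_, ?_⟩
  · rw [← hR.map_sum, hw1]
    simpa using hR.map_ratCast 1
  · funext k
    simp only [Function.comp_apply, Finset.sum_apply, Pi.smul_apply, smul_eq_mul, hR.map_sum]
    refine Finset.sum_congr rfl fun v hv => ?_
    obtain ⟨q, hq⟩ := hV v hv k
    rw [hq, mul_comm (w v), hR.map_ratCast_mul, mul_comm]

theorem IsRationalPolyhedron.eventually_comp_mem {n : ℕ} {P : Set (Fin n → ℝ)}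
    (hP : IsRationalPolyhedron P) {a : Fin n → ℝ} (ha : a ∈ P) :
    ∀ᶠ g in 𝓝[{g | IsRationalizer g}] id, g ∘ a ∈ P := by
  obtain ⟨𝒱, h𝒱, rfl⟩ := hP
  obtain ⟨V, hV, haV⟩ := Set.mem_iUnion₂.1 ha
  exact (eventually_isRationalizer_comp_mem_convexHull (h𝒱 V hV) haV).mono
    fun g hg => Set.mem_biUnion hV hg

theorem IsZMap.eventually_comp {n m : ℕ} {P : Set (Fin n → ℝ)} (hP : IsRationalPolyhedron P)
    {η : (Fin n → ℝ) → (Fin m → ℝ)} (hη : IsZMap P η) {a : Fin n → ℝ} (ha : a ∈ P) :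
    ∀ᶠ g in 𝓝[{g | IsRationalizer g}] id, g ∘ a ∈ P ∧ η (g ∘ a) = g ∘ η a := by
  obtain ⟨S, hS, hηS⟩ := hη.exists_intAffine
  have hmem := hP.eventually_comp_mem ha
  have hlim : Tendsto (fun g : ℝ → ℝ => g ∘ a) (𝓝[{g | IsRationalizer g}] id) (𝓝[P] a) :=
    tendsto_nhdsWithin_iff.2 ⟨tendsto_comp_nhdsWithin_id _ a, hmem⟩
  filter_upwards [hmem, self_mem_nhdsWithin,
    hlim (eventually_eq_piece_of_finite hS hη.1 continuous_intAffine hηS ha)] with g hgP hg hpiece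
  obtain ⟨l, -, hla, hl⟩ := hpiece
  exact ⟨hgP, by rw [hl, hg.intAffine_comp, hla]⟩

theorem IsZMap.exists_rationalPoint_ne_of_eq {n m : ℕ} {P : Set (Fin n → ℝ)}
    (hP : IsRationalPolyhedron P) {η : (Fin n → ℝ) → (Fin m → ℝ)} (hη : IsZMap P η)
    {a b : Fin n → ℝ} (ha : a ∈ P) (hb : b ∈ P) (hne : a ≠ b) (hab : η a = η b) :
    ∃ x ∈ P, ∃ y ∈ P, IsRationalPoint x ∧ IsRationalPoint y ∧ x ≠ y ∧ η x = η y := by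
  have := mem_closure_iff_nhdsWithin_neBot.1 id_mem_closure_setOf_isRationalizer
  have hR : ∀ᶠ g in 𝓝[{g | IsRationalizer g}] id, IsRationalizer g := self_mem_nhdsWithin
  have hsep := eventually_ne_of_tendsto (tendsto_comp_nhdsWithin_id {g | IsRationalizer g} a)
    (tendsto_comp_nhdsWithin_id _ b) hne
  obtain ⟨g, hg, ⟨haP, hηa⟩, ⟨hbP, hηb⟩, hgne⟩ :=
    (hR.and ((hη.eventually_comp hP ha).and ((hη.eventually_comp hP hb).and hsep))).exists
  exact ⟨g ∘ a, haP, g ∘ b, hbP, hg.isRationalPoint a, hg.isRationalPoint b, hgne,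
    by rw [hηa, hηb, hab]⟩

def IsZMonic {n m : ℕ} (P : Set (Fin n → ℝ)) (η : (Fin n → ℝ) → (Fin m → ℝ)) : Prop :=
  ∀ (k : ℕ) (R : Set (Fin k → ℝ)), IsRationalPolyhedron R →
    ∀ μ₁ μ₂ : (Fin k → ℝ) → (Fin n → ℝ), IsZMapTo R P μ₁ → IsZMapTo R P μ₂ →
      (∀ x ∈ R, η (μ₁ x) = η (μ₂ x)) → ∀ x ∈ R, μ₁ x = μ₂ x

def IsZEpic {n m : ℕ} (P : Set (Fin n → ℝ)) (Q : Set (Fin m → ℝ))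
    (η : (Fin n → ℝ) → (Fin m → ℝ)) : Prop :=
  ∀ (k : ℕ) (R : Set (Fin k → ℝ)), IsRationalPolyhedron R →
    ∀ μ₁ μ₂ : (Fin m → ℝ) → (Fin k → ℝ), IsZMapTo Q R μ₁ → IsZMapTo Q R μ₂ →
      (∀ x ∈ P, μ₁ (η x) = μ₂ (η x)) → ∀ y ∈ Q, μ₁ y = μ₂ y

theorem exists_common_denominator {ι : Type*} [Fintype ι] {x : ι → ℝ} (hx : ∀ i, ∃ q : ℚ, x i = q) :
    ∃ D : ℕ, 0 < D ∧ ∃ z : ι → ℤ, ∀ i, x i = z i / D := by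
  choose q hq using hx
  have hD : 0 < ∏ i, (q i).den := Finset.prod_pos fun i _ => (q i).den_pos
  refine ⟨_, hD, ?_⟩
  have hz : ∀ i, ∃ z : ℤ, q i = z / (∏ j, (q j).den : ℕ) := fun i => by
    obtain ⟨c, hc⟩ := Finset.dvd_prod_of_mem (fun j => (q j).den) (Finset.mem_univ i)
    refine ⟨(q i).num * c, ?_⟩
    rw [eq_div_iff (Nat.cast_ne_zero.2 hD.ne'), hc]
    push_cast
    rw [← mul_assoc, Rat.mul_den_eq_num]
  choose z hz using hz
  exact ⟨z, fun i => by rw [hq, hz]; push_cast; rfl⟩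

theorem isZMapTo_singleton_intAffine {n m : ℕ} {c : Fin n → ℝ} {P : Set (Fin m → ℝ)}
    {l : Matrix (Fin m) (Fin n) ℤ × (Fin m → ℤ)} (hc : intAffine l c ∈ P) :
    IsZMapTo {c} P (intAffine l) :=
  ⟨isZMap_intAffine _ l, Set.mapsTo_singleton.2 hc⟩

theorem IsZMonic.eq_of_isRationalPoint {n m : ℕ} {P : Set (Fin n → ℝ)}
    {η : (Fin n → ℝ) → (Fin m → ℝ)} (H : IsZMonic P η) {x y : Fin n → ℝ} (hx : x ∈ P)
    (hy : y ∈ P) (hxr : IsRationalPoint x) (hyr : IsRationalPoint y) (hxy : η x = η y) :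
    x = y := by
  obtain ⟨D, -, z, hz⟩ := exists_common_denominator (x := Sum.elim x y)
    (by rintro (i | i); exacts [hxr i, hyr i])
  -- both points are integer multiples of the rational point `c = 1 / D` of `ℝ¹`
  set c : Fin 1 → ℝ := fun _ => (D : ℝ)⁻¹
  have hc : IsRationalPoint c := fun _ => ⟨(D : ℚ)⁻¹, by push_cast; rfl⟩
  have hR : IsRationalPolyhedron {c} := by
    simpa using isRationalPolyhedron_convexHull {c} (by simpa using hc)
  have hμ : ∀ w : Fin n → ℝ, ∀ s : Fin n → ℤ, (∀ i, w i = s i / D) →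
      intAffine (Matrix.of fun i (_ : Fin 1) => s i, 0) c = w :=
    fun w s hs => funext fun i => by simp [intAffine, c, hs i, div_eq_mul_inv]
  have hx' := hμ x (fun i => z (.inl i)) (fun i => hz (.inl i))
  have hy' := hμ y (fun i => z (.inr i)) (fun i => hz (.inr i))
  have heq := H 1 {c} hR _ _ (isZMapTo_singleton_intAffine (hx' ▸ hx))
    (isZMapTo_singleton_intAffine (hy' ▸ hy))
    (fun u hu => by rw [Set.mem_singleton_iff.1 hu, hx', hy', hxy]) c rfl
  rwa [hx', hy'] at heq

theorem Set.InjOn.isZMonic {n m : ℕ} {P : Set (Fin n → ℝ)} {η : (Fin n → ℝ) → (Fin m → ℝ)}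
    (h : Set.InjOn η P) : IsZMonic P η :=
  fun _ _ _ _ _ h₁ h₂ heq x hx => h (h₁.2 hx) (h₂.2 hx) (heq x hx)

theorem IsZMonic.injOn {n m : ℕ} {P : Set (Fin n → ℝ)} (hP : IsRationalPolyhedron P)
    {η : (Fin n → ℝ) → (Fin m → ℝ)} (hη : IsZMap P η) (H : IsZMonic P η) : Set.InjOn η P := by
  intro a ha b hb hab
  by_contra hne
  obtain ⟨x, hx, y, hy, hxr, hyr, hxy, hηxy⟩ := hη.exists_rationalPoint_ne_of_eq hP ha hb hne hab
  exact hxy (H.eq_of_isRationalPoint hx hy hxr hyr hηxy)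

theorem Set.SurjOn.isZEpic {n m : ℕ} {P : Set (Fin n → ℝ)} {Q : Set (Fin m → ℝ)}
    {η : (Fin n → ℝ) → (Fin m → ℝ)} (h : Set.SurjOn η P Q) : IsZEpic P Q η := by
  intro _ _ _ _ _ _ _ heq y hy
  obtain ⟨x, hx, rfl⟩ := h hy
  exact heq x hx

theorem isRationalPolyhedron_convexHull_zero_const (N : ℕ) :
    IsRationalPolyhedron (convexHull ℝ {0, fun _ : Fin 1 => (N : ℝ)}) := by
  simpa using isRationalPolyhedron_convexHull {0, fun _ : Fin 1 => (N : ℝ)} <| by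
    simp only [Finset.mem_insert, Finset.mem_singleton, forall_eq_or_imp, forall_eq]
    exact ⟨fun _ => ⟨0, by simp⟩, fun _ => ⟨N, by simp⟩⟩

theorem const_mem_convexHull_zero_const {N t : ℝ} (hN : 0 < N) (ht0 : 0 ≤ t) (ht1 : t ≤ N) :
    (fun _ : Fin 1 => t) ∈ convexHull ℝ {0, fun _ => N} := by
  have hsmul := (convex_convexHull ℝ {0, fun _ : Fin 1 => N}).smul_mem_of_zero_mem
    (subset_convexHull ℝ _ (Set.mem_insert _ _))
    (subset_convexHull ℝ _ (Set.mem_insert_of_mem _ rfl))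
    ⟨div_nonneg ht0 hN.le, (div_le_one hN).2 ht1⟩
  convert hsmul using 1
  funext
  simp [div_mul_cancel₀ t hN.ne']

section Tent

variable {m : ℕ} (D : ℕ) (p : Fin m → ℤ)

def tent (y : Fin m → ℝ) : ℝ := max 0 ((m + 1 : ℝ) - ∑ i, |D * y i - p i|)

theorem tent_nonneg (y : Fin m → ℝ) : 0 ≤ tent D p y := le_max_left _ _

theorem tent_le (y : Fin m → ℝ) : tent D p y ≤ m + 1 :=
  max_le (by positivity) (sub_le_self _ (Finset.sum_nonneg fun _ _ => abs_nonneg _))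

theorem tent_pos {q : Fin m → ℝ} (hq : ∀ i, |D * q i - p i| ≤ 1 / 2) : 0 < tent D p q := by
  have : ∑ i, |D * q i - p i| ≤ m / 2 := by
    simpa [div_eq_mul_inv] using Finset.sum_le_sum fun i (_ : i ∈ Finset.univ) => hq i
  exact lt_max_of_lt_right (by linarith)

theorem tent_eq_zero {y : Fin m → ℝ} {i : Fin m} (hi : m + 1 ≤ |D * y i - p i|) :
    tent D p y = 0 :=
  max_eq_left <| sub_nonpos.2 <| hi.trans <| Finset.single_le_sum (f := fun i => |D * y i - p i|)
    (fun _ _ => abs_nonneg _) (Finset.mem_univ i)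

theorem tent_round_pos (q : Fin m → ℝ) : 0 < tent D (fun i => round (D * q i)) q :=
  tent_pos D _ fun _ => abs_sub_round _

theorem tent_round_eq_zero {q y : Fin m → ℝ} {ε : ℝ} (hD : m + 2 ≤ D * ε) {i : Fin m}
    (hi : ε ≤ |y i - q i|) : tent D (fun i => round (D * q i)) y = 0 := by
  refine tent_eq_zero D _ (i := i) ?_
  have hround : |D * q i - round (D * q i)| ≤ 1 / 2 := abs_sub_round _
  have htri : D * |y i - q i| - |D * q i - round (D * q i)| ≤ |D * y i - round (D * q i)| := by
    have := abs_sub_abs_le_abs_sub (D * y i - D * q i) (-(D * q i - round (D * q i)))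
    rwa [abs_neg, ← mul_sub, abs_mul, Nat.abs_cast, sub_neg_eq_add, mul_sub,
      sub_add_sub_cancel] at this
  nlinarith [mul_le_mul_of_nonneg_left hi (Nat.cast_nonneg (α := ℝ) D)]

/-- The integer affine map that agrees with `tent D p` where `0 ≤ D * y j - p j` holds exactly
for the `j` with `s j`. -/
def tentPiece (s : Fin m → Bool) : Matrix (Fin 1) (Fin m) ℤ × (Fin 1 → ℤ) :=
  (Matrix.of fun _ j => if s j then -D else D,
    fun _ => m + 1 + ∑ j, if s j then p j else -p j)

theorem isZMap_tent (S : Set (Fin m → ℝ)) : IsZMap S (fun y (_ : Fin 1) => tent D p y) := by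
  refine isZMap_of_finite (by unfold tent; fun_prop) ((Set.finite_range (tentPiece D p)).insert 0)
    fun y _ => ?_
  by_cases h : (m + 1 : ℝ) - ∑ i, |D * y i - p i| ≤ 0
  · refine ⟨0, Set.mem_insert _ _, funext fun _ => ?_⟩
    simp [tent, intAffine, max_eq_left h]
  set s : Fin m → Bool := fun j => decide (0 ≤ D * y j - p j)
  refine ⟨tentPiece D p s, Set.mem_insert_of_mem _ ⟨s, rfl⟩, funext fun _ => ?_⟩
  have hterm : ∀ j, ((if s j then -D else D : ℤ) : ℝ) * y j + ((if s j then p j else -p j : ℤ) : ℝ)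
      = -|D * y j - p j| := fun j => by
    by_cases hj : 0 ≤ D * y j - p j
    · simp only [s, hj, decide_true, if_true, abs_of_nonneg hj]
      push_cast
      ring
    · simp only [s, hj, decide_false, Bool.false_eq_true, if_false, abs_of_neg (not_le.1 hj)]
      push_cast
      ring
  simp only [tent, max_eq_right (not_le.1 h).le, intAffine, tentPiece, Matrix.of_apply]
  push_cast
  rw [← sub_eq_zero]
  have := Finset.sum_congr rfl fun j (_ : j ∈ Finset.univ) => hterm j
  push_cast at this
  rw [Finset.sum_add_distrib, Finset.sum_neg_distrib] at this
  linarith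

theorem isZMapTo_tent (S : Set (Fin m → ℝ)) :
    IsZMapTo S (convexHull ℝ {0, fun _ => (m + 1 : ℝ)}) (fun y (_ : Fin 1) => tent D p y) :=
  ⟨isZMap_tent D p S, fun y _ =>
    const_mem_convexHull_zero_const (by positivity) (tent_nonneg D p y) (tent_le D p y)⟩

end Tent

theorem IsZEpic.surjOn {n m : ℕ} {P : Set (Fin n → ℝ)} {Q : Set (Fin m → ℝ)}
    (hP : IsRationalPolyhedron P) {η : (Fin n → ℝ) → (Fin m → ℝ)} (hη : IsZMap P η)
    (H : IsZEpic P Q η) : Set.SurjOn η P Q := by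
  intro q hq
  by_contra hqC
  obtain ⟨ε, hε, hball⟩ := Metric.isOpen_iff.1
    (hP.isCompact.image_of_continuousOn hη.1).isClosed.isOpen_compl q hqC
  obtain ⟨D, hD⟩ := exists_nat_ge ((m + 2) / ε)
  have hC : ∀ x ∈ P, tent D (fun i => round (D * q i)) (η x) = 0 := by
    intro x hx
    obtain ⟨i, hi⟩ : ∃ i, ε ≤ |η x i - q i| := by
      by_contra! h
      exact hball ((dist_pi_lt_iff hε).2 fun i => by rw [Real.dist_eq]; exact h i) ⟨x, hx, rfl⟩
    exact tent_round_eq_zero D ((div_le_iff₀ hε).1 hD) hi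
  have h0 : ∀ y, intAffine (0 : Matrix (Fin 1) (Fin m) ℤ × (Fin 1 → ℤ)) y = 0 := fun y => by
    funext
    simp [intAffine]
  have hzero : IsZMapTo Q (convexHull ℝ {0, fun _ => (m + 1 : ℝ)}) (intAffine 0) :=
    ⟨isZMap_intAffine Q 0, fun y _ => by
      rw [h0]
      exact subset_convexHull ℝ {0, fun _ : Fin 1 => (m + 1 : ℝ)} (by simp)⟩
  have := congrFun (H 1 _ (by exact_mod_cast isRationalPolyhedron_convexHull_zero_const (m + 1)) _ _
    (isZMapTo_tent D _ Q) hzero (fun x hx => by rw [h0]; exact funext fun _ => hC x hx) q hq) 0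
  rw [h0] at this
  exact (tent_round_pos D q).ne' this

theorem statement9_general {n m : ℕ} {P : Set (Fin n → ℝ)} {Q : Set (Fin m → ℝ)}
    (hP : IsRationalPolyhedron P)
    {η : (Fin n → ℝ) → (Fin m → ℝ)} (hη : IsZMapTo P Q η) :
    (Set.InjOn η P ↔
      ∀ (k : ℕ) (R : Set (Fin k → ℝ)), IsRationalPolyhedron R →
        ∀ μ₁ μ₂ : (Fin k → ℝ) → (Fin n → ℝ), IsZMapTo R P μ₁ → IsZMapTo R P μ₂ →
          (∀ x ∈ R, η (μ₁ x) = η (μ₂ x)) → ∀ x ∈ R, μ₁ x = μ₂ x) ∧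
    (Set.SurjOn η P Q ↔
      ∀ (k : ℕ) (R : Set (Fin k → ℝ)), IsRationalPolyhedron R →
        ∀ μ₁ μ₂ : (Fin m → ℝ) → (Fin k → ℝ), IsZMapTo Q R μ₁ → IsZMapTo Q R μ₂ →
          (∀ x ∈ P, μ₁ (η x) = μ₂ (η x)) → ∀ y ∈ Q, μ₁ y = μ₂ y) :=
  ⟨⟨Set.InjOn.isZMonic, IsZMonic.injOn hP hη.1⟩, ⟨Set.SurjOn.isZEpic, IsZEpic.surjOn hP hη.1⟩⟩

/-- Theorem (monic/epic): a Z-map `η : P → Q` is monic in the category of rational polyhedra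
iff it is injective, and epic iff it is onto `Q`. -/
theorem statement9 {n m : ℕ} {P : Set (Fin n → ℝ)} {Q : Set (Fin m → ℝ)}
    (hP : IsRationalPolyhedron P) (hQ : IsRationalPolyhedron Q)
    {η : (Fin n → ℝ) → (Fin m → ℝ)} (hη : IsZMapTo P Q η) :
    (Set.InjOn η P ↔
      ∀ (k : ℕ) (R : Set (Fin k → ℝ)), IsRationalPolyhedron R →
        ∀ μ₁ μ₂ : (Fin k → ℝ) → (Fin n → ℝ), IsZMapTo R P μ₁ → IsZMapTo R P μ₂ →
          (∀ x ∈ R, η (μ₁ x) = η (μ₂ x)) → ∀ x ∈ R, μ₁ x = μ₂ x) ∧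
    (Set.SurjOn η P Q ↔
      ∀ (k : ℕ) (R : Set (Fin k → ℝ)), IsRationalPolyhedron R →
        ∀ μ₁ μ₂ : (Fin m → ℝ) → (Fin k → ℝ), IsZMapTo Q R μ₁ → IsZMapTo Q R μ₂ →
          (∀ x ∈ P, μ₁ (η x) = μ₂ (η x)) → ∀ y ∈ Q, μ₁ y = μ₂ y) :=
  statement9_general hP hη
end

section
/- Let S ⊆ ℝ^n be a regular t-simplex with vertices v_0,…,v_t. Then the following are equivalent: (i) S is strongly regular, i.e., gcd(den(v_0),…,den(v_t)) = 1; (ii) S is anchored, i.e., the affine hull of S intersects ℤ^n (there exist real numbers λ_0,…,λ_t with λ_0 + ⋯ + λ_t = 1 and λ_0 v_0 + ⋯ + λ_t v_t ∈ ℤ^n). -/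
open scoped BigOperators

/-!
The homogeneous correspondents `ṽᵢ = dᵢ (vᵢ, 1)` are members of a basis of `ℤ^{n+1}`, so they
stay linearly independent over `ℝ`, and an integer vector has integer coordinates along them.
An anchoring affine combination `∑ λᵢ vᵢ = z ∈ ℤⁿ` lifts to `(z, 1) = ∑ (λᵢ / dᵢ) ṽᵢ`; hence each
`λᵢ / dᵢ` is an integer `mᵢ` and `1 = ∑ λᵢ = ∑ mᵢ dᵢ`, so `gcd dᵢ = 1`. Conversely, a Bézout
identity `∑ cᵢ dᵢ = 1` yields the integer point `∑ cᵢ dᵢ vᵢ` of the affine hull.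
-/

theorem Finset.natCast_gcd {ι : Type*} (s : Finset ι) (g : ι → ℕ) :
    ((s.gcd g : ℕ) : ℤ) = s.gcd (fun i => (g i : ℤ)) := by
  classical
  induction s using Finset.induction_on with
  | empty => simp
  | insert a s _ ih => simp [Finset.gcd_insert, ← ih, ← Int.coe_gcd]; rfl

theorem Finset.gcd_eq_one_iff_exists_sum_mul_eq_one {ι : Type*} (s : Finset ι) (g : ι → ℕ) :
    s.gcd g = 1 ↔ ∃ c : ι → ℤ, ∑ i ∈ s, c i * g i = 1 := by
  constructor
  · intro h
    obtain ⟨c, hc⟩ := s.gcd_eq_sum_mul (fun i => (g i : ℤ))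
    exact ⟨c, by simpa [mul_comm, ← Finset.natCast_gcd, h] using hc.symm⟩
  · rintro ⟨c, hc⟩
    have : ((s.gcd g : ℕ) : ℤ) ∣ 1 :=
      hc ▸ Finset.dvd_sum fun i hi =>
        (Int.natCast_dvd_natCast.2 (Finset.gcd_dvd hi)).mul_left _
    exact Nat.dvd_one.1 (Int.natCast_dvd_natCast.1 this)

theorem Module.Basis.linearIndependent_intCast {ι : Type*} [Fintype ι] [DecidableEq ι]
    (b : Module.Basis ι ℤ (ι → ℤ)) :
    LinearIndependent ℝ (fun k => ((↑) ∘ b k : ι → ℝ)) := by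
  set M : Matrix ι ι ℤ := Matrix.of fun k j => b k j
  have hdet : IsUnit M.det := by
    have hM : (Pi.basisFun ℤ ι).toMatrix b = M.transpose := by
      ext; simp [M, Module.Basis.toMatrix_apply]
    let := (Pi.basisFun ℤ ι).invertibleToMatrix b
    simpa [hM] using Matrix.isUnit_det_of_invertible ((Pi.basisFun ℤ ι).toMatrix b)
  have hdetℝ : (M.map ((↑) : ℤ → ℝ)).det = ((M.det : ℤ) : ℝ) :=
    ((Int.castRingHom ℝ).map_det M).symm
  exact Matrix.linearIndependent_rows_of_det_ne_zero (hdetℝ ▸ Int.cast_ne_zero.2 hdet.ne_zero)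

theorem Module.Basis.eq_repr_of_sum_smul_intCast_eq {ι κ : Type*} [Fintype ι] [DecidableEq ι]
    [Fintype κ] (b : Module.Basis ι ℤ (ι → ℤ)) {f : κ → ι} (hf : Function.Injective f)
    {r : κ → ℝ} {w : ι → ℤ} (h : ∑ i, r i • ((↑) ∘ b (f i) : ι → ℝ) = (↑) ∘ w) (i : κ) :
    r i = b.repr w (f i) := by
  have hw : ∑ k, (b.repr w k : ℝ) • ((↑) ∘ b k : ι → ℝ) = (↑) ∘ w := by
    ext j
    have := congrFun (b.sum_repr w) j
    simp only [Finset.sum_apply, Pi.smul_apply, smul_eq_mul] at this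
    simp [← this]
  have hr : ∑ i, r i • ((↑) ∘ b (f i) : ι → ℝ) =
      ∑ k, Function.extend f r 0 k • ((↑) ∘ b k : ι → ℝ) :=
    Fintype.sum_of_injective f hf _ _
      (fun k hk => by simp [Function.extend_apply' _ _ _ (by simpa using hk)])
      (fun i => by rw [hf.extend_apply])
  have := Fintype.linearIndependent_iffₛ.1 b.linearIndependent_intCast _ _
    (hr.symm.trans (h.trans hw.symm)) (f i)
  rwa [hf.extend_apply] at this

theorem IsRationalPoint.den_spec {n : ℕ} {x : Fin n → ℝ} (hx : IsRationalPoint x) :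
    0 < den x ∧ ∀ i, ∃ z : ℤ, (den x : ℝ) * x i = z := by
  choose q hq using hx
  have hne : {d : ℕ | 0 < d ∧ ∀ i, ∃ z : ℤ, (d : ℝ) * x i = z}.Nonempty := by
    refine ⟨∏ i, (q i).den, Finset.prod_pos fun i _ => (q i).pos, fun i => ?_⟩
    refine ⟨(q i).num * ∏ j ∈ Finset.univ.erase i, (q j).den, ?_⟩
    rw [hq i, ← Finset.mul_prod_erase _ _ (Finset.mem_univ i), Rat.cast_def]
    have : ((q i).den : ℝ) ≠ 0 := Nat.cast_ne_zero.2 (q i).den_nz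
    push_cast
    field_simp
  exact Nat.sInf_mem hne

theorem homCorr_eq_den_smul_snoc {n : ℕ} (x : Fin n → ℝ) :
    homCorr x = (den x : ℝ) • (Fin.snoc x 1 : Fin (n + 1) → ℝ) := by
  ext j
  refine Fin.lastCases ?_ (fun j => ?_) j <;> simp [homCorr]

theorem sum_div_den_smul_homCorr {ι : Type*} [Fintype ι] {n : ℕ} {v : ι → Fin n → ℝ}
    (hv : ∀ i, den (v i) ≠ 0) (lam : ι → ℝ) :
    ∑ i, (lam i / den (v i)) • homCorr (v i) =
      (Fin.snoc (∑ i, lam i • v i) (∑ i, lam i) : Fin (n + 1) → ℝ) := by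
  ext j
  refine Fin.lastCases ?_ (fun j => ?_) j <;>
    simp [homCorr_eq_den_smul_snoc, Finset.sum_apply, smul_smul, hv]

/-- Lemma (SimplexAnchvsStReg): a regular `t`-simplex with vertices `v_0, …, v_t` is strongly
regular (`gcd(den v_0, …, den v_t) = 1`) iff it is anchored (its affine hull meets `ℤ^n`). -/
theorem statement18 {n t : ℕ} (v : Fin (t + 1) → (Fin n → ℝ)) (hv : IsRegularFamily v) :
    Finset.univ.gcd (fun i => den (v i)) = 1 ↔
      ∃ lam : Fin (t + 1) → ℝ, (∑ i, lam i) = 1 ∧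
        ∀ j, ∃ z : ℤ, (∑ i, lam i * v i j) = (z : ℝ) := by
  obtain ⟨hrat, -, b, f, hf, hb⟩ := hv
  have hden i := (hrat i).den_spec
  rw [Finset.gcd_eq_one_iff_exists_sum_mul_eq_one]
  constructor
  · rintro ⟨c, hc⟩
    refine ⟨fun i => (c i : ℝ) * den (v i), by push_cast; exact_mod_cast hc, fun j => ?_⟩
    choose z hz using fun i => (hden i).2 j
    exact ⟨∑ i, c i * z i, by push_cast; simp [mul_assoc, hz]⟩
  · rintro ⟨lam, hsum, hanchor⟩
    choose z hz using hanchor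
    have hcomb : ∑ i, (lam i / den (v i)) • ((↑) ∘ b (f i) : Fin (n + 1) → ℝ) =
        (↑) ∘ (Fin.snoc z 1 : Fin (n + 1) → ℤ) := by
      simp only [Function.comp_def, hb, hsum,
        sum_div_den_smul_homCorr (fun i => (hden i).1.ne') lam]
      ext j
      refine Fin.lastCases ?_ (fun j => ?_) j
      · simp
      · simp [Finset.sum_apply, hz]
    refine ⟨fun i => b.repr (Fin.snoc z 1) (f i), ?_⟩
    have hcoeff := b.eq_repr_of_sum_smul_intCast_eq hf hcomb
    have hlam i : lam i = b.repr (Fin.snoc z 1) (f i) * den (v i) := by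
      rw [← hcoeff, div_mul_cancel₀ _ (Nat.cast_ne_zero.2 (hden i).1.ne')]
    exact_mod_cast (Finset.sum_congr rfl fun i _ => hlam i).symm.trans hsum
end
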